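/- arXiv:1811.09061 — 2 statements merged into one kernel-verified Lean document; each statement's English description precedes it below -/
import Mathlib

section
/- For virtual knot diagrams K_1 and K_2 and a fixed connected sum K_1 \sharp K_2, one has \mathcal{F}(K_1 \sharp K_2) = \mathcal{F}(K_1) \sharp F(K_2) + F(K_1) \sharp \mathcal{F}(K_2), where all connected sums are taken at the same place and \sharp is extended bilinearly to the free Z-module on flat virtual knot diagrams. -/
open Finset

/-- An abstract interface for the combinatorics of virtual knot theory:
oriented virtual knot diagrams (Gauss diagrams with signed directed chords),
their real crossings, flat shadows, smoothings of crossings, and the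
generalized Reidemeister moves.  Flat virtual knots and 2-component flat
virtual links appear as the types `UFlat`, `OFlat` and `Flat2` of equivalence
classes under the flat generalized Reidemeister moves. -/
structure VKT where
  /-- Oriented virtual knot diagrams (Gauss diagrams with signed, directed chords). -/
  Diagram : Type
  /-- The real crossings (chords of the Gauss diagram) of a diagram. -/
  Crossing : Diagram → Type
  crossingFintype : ∀ D, Fintype (Crossing D)
  crossingDecEq : ∀ D, DecidableEq (Crossing D)
  /-- The sign (local writhe) of a real crossing. -/
  sign : ∀ {D}, Crossing D → ℤ
  sign_unit : ∀ {D} (c : Crossing D), sign c = 1 ∨ sign c = -1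
  /-- Equivalence of diagrams generated by the generalized Reidemeister moves;
  virtual knots are the equivalence classes. -/
  equiv : Diagram → Diagram → Prop
  /-- Unoriented flat virtual knots (classes of unoriented flat diagrams modulo
  the flat generalized Reidemeister moves); the basis of the module `𝓜₁ᵘ`. -/
  UFlat : Type
  /-- Oriented flat virtual knots. -/
  OFlat : Type
  /-- The (unoriented) shadow `F(K)` of a diagram, as an unoriented flat virtual knot. -/
  shadow : Diagram → UFlat
  /-- The oriented shadow of a diagram, as an oriented flat virtual knot. -/
  oshadow : Diagram → OFlat
  /-- The trivial (unknotted) unoriented flat virtual knot. -/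
  trivialU : UFlat
  /-- The unoriented flat virtual knot `K̃_c` obtained by 0-smoothing a real
  crossing (the smoothing preserving one component) and taking the shadow. -/
  smooth0 : ∀ {D}, Crossing D → UFlat
  /-- Oriented 2-component flat virtual links; the basis of the module `𝓜₂`. -/
  Flat2 : Type
  /-- The oriented 2-component flat virtual link `L̃_c` obtained by 1-smoothing a
  real crossing (the oriented smoothing splitting the knot into two components)
  and taking the shadow. -/
  smooth1 : ∀ {D}, Crossing D → Flat2
  /-- `F(K) ∪ U` : the shadow of `K` together with a disjoint unknotted component. -/
  shadowCupU : Diagram → Flat2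
  /-- `D` is a classical knot diagram (a planar Gauss-diagram realization with no
  virtual crossings). -/
  IsClassical : Diagram → Prop
  /-- `R1 D D' c e` : `D'` is obtained from `D` by a first Reidemeister move creating
  the real crossing `c`; `e` identifies the crossings of `D` with the remaining
  (uninvolved) crossings of `D'`. -/
  R1 : ∀ (D D' : Diagram) (_c : Crossing D'), (Crossing D → Crossing D') → Prop
  /-- `R2 D D' c₁ c₂ e` : `D'` is obtained from `D` by a second Reidemeister move
  creating the real crossings `c₁, c₂`; `e` identifies the uninvolved crossings. -/
  R2 : ∀ (D D' : Diagram) (_c₁ _c₂ : Crossing D'), (Crossing D → Crossing D') → Prop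
  /-- `R3 D D' c₁ c₂ c₃ c₁' c₂' c₃' e` : `D` and `D'` are related by a third
  Reidemeister move whose three involved crossings `c₁, c₂, c₃` of `D` correspond
  to `c₁', c₂', c₃'` of `D'`; `e` identifies all the crossings of `D` with those
  of `D'`. -/
  R3 : ∀ (D D' : Diagram) (_c₁ _c₂ _c₃ : Crossing D) (_c₁' _c₂' _c₃' : Crossing D'),
      (Crossing D → Crossing D') → Prop
  /-- `Detour D D' e` : `D` and `D'` are related by a detour move (a purely virtual
  Reidemeister move or the mixed move `Ω₃ᵛ`), which involves no real crossing;
  `e` is the canonical identification of the real crossings. -/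
  Detour : ∀ (D D' : Diagram), (Crossing D ≃ Crossing D') → Prop
  /-- The crossing change (switch of over/under information) at a real crossing. -/
  switch : ∀ (D : Diagram), Crossing D → Diagram
  /-- The canonical identification of the crossings of `D` with those of `switch D c`. -/
  switchEquiv : ∀ (D : Diagram) (c : Crossing D), Crossing D ≃ Crossing (switch D c)
  /-- `r(K)` : reversing the orientation of a diagram. -/
  rev : Diagram → Diagram
  /-- The canonical identification of crossings under orientation reversal. -/
  revEquiv : ∀ D, Crossing D ≃ Crossing (rev D)
  /-- `m(K)` : switching all real crossings of a diagram. -/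
  mir : Diagram → Diagram
  /-- The canonical identification of crossings under `mir`. -/
  mirEquiv : ∀ D, Crossing D ≃ Crossing (mir D)
  /-- Reversing the orientation of an oriented 2-component flat virtual link. -/
  rev2 : Flat2 → Flat2
  /-- The index `Ind(c)` of a real crossing: the signed count of chords linking the
  chord `c` in the Gauss diagram (signs of chords whose arrowhead lies on the arc
  from the head of `c` to its tail, minus the signs of those on the other arc). -/
  Ind : ∀ {D}, Crossing D → ℤ
  /-- The flat linking number of a 2-component flat virtual link. -/
  lk2 : Flat2 → ℕ
  /-- Direction-decorated Gauss diagrams: directed chords without signs. -/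
  GaussDir : Type
  /-- The underlying direction-decorated Gauss diagram of a virtual knot diagram
  (forget the signs of the chords and the planar realization). -/
  gauss : Diagram → GaussDir
  /-- All real crossings of the diagram are positive. -/
  IsPositive : Diagram → Prop
  /-- Flat virtual knot diagrams. -/
  FDiagram : Type
  /-- The flat crossings of a flat virtual knot diagram. -/
  fCrossing : FDiagram → Type
  fFintype : ∀ F, Fintype (fCrossing F)
  /-- The index of a flat crossing, computed in the all-positive virtual knot
  diagram lying over the flat diagram. -/
  fInd : ∀ {F}, fCrossing F → ℤ
  /-- Equivalence of flat diagrams under the flat generalized Reidemeister moves. -/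
  fEquiv : FDiagram → FDiagram → Prop
  /-- The shadow of a virtual knot diagram, as a flat diagram (`D` overlies `forget D`). -/
  forget : Diagram → FDiagram
  /-- The flat virtual knot represented by a flat diagram. -/
  fclass : FDiagram → UFlat
  /-- The connected sum of two diagrams, performed at a fixed chosen place. -/
  csum : Diagram → Diagram → Diagram
  /-- The connected sum of flat virtual knots, performed at the same fixed place. -/
  csumU : UFlat → UFlat → UFlat
  /-- The identification of the crossings of a connected sum with the disjoint
  union of the crossings of the two summands. -/
  csumEquiv : ∀ D₁ D₂, (Crossing D₁ ⊕ Crossing D₂) ≃ Crossing (csum D₁ D₂)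

attribute [instance] VKT.crossingFintype VKT.crossingDecEq VKT.fFintype

namespace VKT

variable (T : VKT)

/-- The writhe `w(K)` of a diagram: the sum of the signs of its real crossings. -/
def writhe (D : T.Diagram) : ℤ := ∑ c : T.Crossing D, T.sign c

/-- The invariant `𝓕(K) = ∑_c w(c)·K̃_c − w(K)·F(K)`, an element of the free
ℤ-module `𝓜₁ᵘ` on unoriented flat virtual knots. -/
noncomputable def Fcal (D : T.Diagram) : T.UFlat →₀ ℤ :=
  (∑ c : T.Crossing D, T.sign c • Finsupp.single (T.smooth0 c) (1 : ℤ))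
    - T.writhe D • Finsupp.single (T.shadow D) (1 : ℤ)

/-- The invariant `𝓛(K) = ∑_c w(c)·L̃_c − w(K)·(F(K) ∪ U)`, an element of the free
ℤ-module `𝓜₂` on oriented 2-component flat virtual links. -/
noncomputable def Lcal (D : T.Diagram) : T.Flat2 →₀ ℤ :=
  (∑ c : T.Crossing D, T.sign c • Finsupp.single (T.smooth1 c) (1 : ℤ))
    - T.writhe D • Finsupp.single (T.shadowCupU D) (1 : ℤ)

/-- The writhe `w(K̃) = ∑_c sgn(Ind(c))` of a flat virtual knot diagram. -/
def wflat (F : T.FDiagram) : ℤ := ∑ c : T.fCrossing F, (T.fInd c).sign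

end VKT

/-! The crossings of `K₁ ♯ K₂` are those of `K₁` together with those of `K₂`, with unchanged
signs, so both the smoothing sum and the writhe of `K₁ ♯ K₂` split into a `K₁`-part and a
`K₂`-part. Smoothing a crossing of `K₁` gives `(K₁)_c ♯ F(K₂)`, and the shadow term
`w(K₁ ♯ K₂) F(K₁ ♯ K₂) = (w(K₁) + w(K₂)) F(K₁) ♯ F(K₂)` splits the same way; the
bilinear extension of `♯` is `Finsupp.mapDomain` of `(· ♯ F(K₂))`, resp. `(F(K₁) ♯ ·)`. -/

theorem Finsupp.sum_smul_single_one {α β R : Type*} [Semiring R] (g : α → β) (f : α →₀ R) :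
    f.sum (fun x m => m • Finsupp.single (g x) (1 : R)) = Finsupp.mapDomain g f := by
  simp only [Finsupp.smul_single_one]
  rfl

namespace VKT

variable (T : VKT)

theorem mapDomain_Fcal (g : T.UFlat → T.UFlat) (D : T.Diagram) :
    Finsupp.mapDomain g (T.Fcal D) =
      (∑ c : T.Crossing D, T.sign c • Finsupp.single (g (T.smooth0 c)) (1 : ℤ))
        - T.writhe D • Finsupp.single (g (T.shadow D)) (1 : ℤ) := by
  simp only [Fcal, Finsupp.mapDomain_sub, Finsupp.mapDomain_finsetSum, Finsupp.mapDomain_smul,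
    Finsupp.mapDomain_single]

theorem sum_crossing_csum {M : Type*} [AddCommMonoid M] (D₁ D₂ : T.Diagram)
    (f : T.Crossing (T.csum D₁ D₂) → M) :
    ∑ c, f c = ∑ c, f (T.csumEquiv D₁ D₂ (.inl c)) + ∑ c, f (T.csumEquiv D₁ D₂ (.inr c)) := by
  rw [← Equiv.sum_comp (T.csumEquiv D₁ D₂), Fintype.sum_sum_type]

theorem writhe_csum {D₁ D₂ : T.Diagram}
    (hs₁ : ∀ c : T.Crossing D₁, T.sign (T.csumEquiv D₁ D₂ (.inl c)) = T.sign c)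
    (hs₂ : ∀ c : T.Crossing D₂, T.sign (T.csumEquiv D₁ D₂ (.inr c)) = T.sign c) :
    T.writhe (T.csum D₁ D₂) = T.writhe D₁ + T.writhe D₂ := by
  simp only [writhe, sum_crossing_csum, hs₁, hs₂]

end VKT

/-- For a connected sum `K₁ ♯ K₂` taken at a fixed place,
`𝓕(K₁ ♯ K₂) = 𝓕(K₁) ♯ F(K₂) + F(K₁) ♯ 𝓕(K₂)`, where `♯` is extended bilinearly to the
free ℤ-module on (unoriented) flat virtual knots, all connected sums being taken at
the same place.  (The hypotheses record the behaviour of signs, smoothings and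
shadows under connected sum.) -/
theorem Fcal_connected_sum (T : VKT) (D₁ D₂ : T.Diagram)
    (hs₁ : ∀ c : T.Crossing D₁, T.sign (T.csumEquiv D₁ D₂ (Sum.inl c)) = T.sign c)
    (hs₂ : ∀ c : T.Crossing D₂, T.sign (T.csumEquiv D₁ D₂ (Sum.inr c)) = T.sign c)
    (hm₁ : ∀ c : T.Crossing D₁,
      T.smooth0 (T.csumEquiv D₁ D₂ (Sum.inl c)) = T.csumU (T.smooth0 c) (T.shadow D₂))
    (hm₂ : ∀ c : T.Crossing D₂,
      T.smooth0 (T.csumEquiv D₁ D₂ (Sum.inr c)) = T.csumU (T.shadow D₁) (T.smooth0 c))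
    (hsh : T.shadow (T.csum D₁ D₂) = T.csumU (T.shadow D₁) (T.shadow D₂)) :
    T.Fcal (T.csum D₁ D₂) =
      (T.Fcal D₁).sum (fun x m => m • Finsupp.single (T.csumU x (T.shadow D₂)) (1 : ℤ))
        + (T.Fcal D₂).sum (fun y n =>
            n • Finsupp.single (T.csumU (T.shadow D₁) y) (1 : ℤ)) := by
  rw [Finsupp.sum_smul_single_one, Finsupp.sum_smul_single_one, T.mapDomain_Fcal,
    T.mapDomain_Fcal, VKT.Fcal, T.sum_crossing_csum, T.writhe_csum hs₁ hs₂, hsh]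
  simp only [hs₁, hs₂, hm₁, hm₂, add_smul]
  abel
end

section
/- For the flat virtual knot \widetilde{K}_{p,q} whose Gauss diagram consists of p parallel horizontal chords and q parallel vertical chords, each horizontal chord meeting each vertical chord exactly once, every horizontal chord has index -q and every vertical chord has index p; hence w(\widetilde{K}_{p,q}) = q - p, and \widetilde{K}_{p,q} is a nontrivial flat virtual knot whenever p \neq q. -/
open Finset

section BipartiteLinking

variable {α β γ : Type*} [Fintype α] [Fintype β] [Fintype γ]

theorem Equiv.sum_eq_sum_inl_add_sum_inr {M : Type*} [AddCommMonoid M] (e : α ≃ β ⊕ γ)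
    (f : α → M) :
    ∑ a, f a = ∑ b, f (e.symm (Sum.inl b)) + ∑ c, f (e.symm (Sum.inr c)) := by
  rw [← e.symm.sum_comp, Fintype.sum_sum_type]

theorem sum_apply_inl_of_bipartite (e : α ≃ β ⊕ γ) (ε : α → α → ℤ) (a : ℤ)
    (hcross : ∀ b c, ε (e.symm (Sum.inl b)) (e.symm (Sum.inr c)) = a)
    (hsame : ∀ b b', ε (e.symm (Sum.inl b)) (e.symm (Sum.inl b')) = 0) (b : β) :
    ∑ x, ε (e.symm (Sum.inl b)) x = Fintype.card γ * a := by
  simp [e.sum_eq_sum_inl_add_sum_inr, hcross, hsame]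

theorem sum_apply_inr_of_bipartite (e : α ≃ β ⊕ γ) (ε : α → α → ℤ) (a : ℤ)
    (hcross : ∀ c b, ε (e.symm (Sum.inr c)) (e.symm (Sum.inl b)) = a)
    (hsame : ∀ c c', ε (e.symm (Sum.inr c)) (e.symm (Sum.inr c')) = 0) (c : γ) :
    ∑ x, ε (e.symm (Sum.inr c)) x = Fintype.card β * a := by
  simp [e.sum_eq_sum_inl_add_sum_inr, hcross, hsame]

end BipartiteLinking

namespace VKT

variable (T : VKT)

theorem wflat_eq_card_sub_card {β γ : Type*} [Fintype β] [Fintype γ] {F : T.FDiagram}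
    (e : T.fCrossing F ≃ β ⊕ γ) (hneg : ∀ b, T.fInd (e.symm (Sum.inl b)) < 0)
    (hpos : ∀ c, 0 < T.fInd (e.symm (Sum.inr c))) :
    T.wflat F = Fintype.card γ - Fintype.card β := by
  simp only [wflat, e.sum_eq_sum_inl_add_sum_inr, Int.sign_eq_neg_one_of_neg (hneg _),
    Int.sign_eq_one_of_pos (hpos _), sum_const, card_univ, Int.nsmul_eq_mul]
  ring

theorem wflat_eq_zero_of_isEmpty (U : T.FDiagram) [IsEmpty (T.fCrossing U)] : T.wflat U = 0 :=
  Fintype.sum_empty _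

end VKT

/-- For the lattice-like flat virtual knot `K̃_{p,q}` (its crossings are `p` horizontal
chords and `q` vertical chords, each horizontal chord crossing each vertical chord
exactly once, with the linking contributions `ε` as dictated by the directions):
every horizontal chord has index `−q`, every vertical chord has index `p`, hence
`w(K̃_{p,q}) = q − p`, and `K̃_{p,q}` is a nontrivial flat virtual knot whenever
`p ≠ q`.  (The hypothesis `hwinv` records that `w` is a flat virtual knot invariant,
which vanishes on any crossingless — hence unknotted — diagram.) -/
theorem lattice_flat_knot_nontrivial (T : VKT) (p q : ℕ) (hp : 0 < p) (hq : 0 < q)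
    (F : T.FDiagram) (e : T.fCrossing F ≃ (Fin p ⊕ Fin q))
    (ε : T.fCrossing F → T.fCrossing F → ℤ)
    (hHV : ∀ (i : Fin p) (j : Fin q),
      ε (e.symm (Sum.inl i)) (e.symm (Sum.inr j)) = -1)
    (hVH : ∀ (j : Fin q) (i : Fin p),
      ε (e.symm (Sum.inr j)) (e.symm (Sum.inl i)) = 1)
    (hHH : ∀ i i' : Fin p, ε (e.symm (Sum.inl i)) (e.symm (Sum.inl i')) = 0)
    (hVV : ∀ j j' : Fin q, ε (e.symm (Sum.inr j)) (e.symm (Sum.inr j')) = 0)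
    (hdef : ∀ c : T.fCrossing F, T.fInd c = ∑ c' : T.fCrossing F, ε c c')
    (hwinv : ∀ F₁ F₂ : T.FDiagram, T.fEquiv F₁ F₂ → T.wflat F₁ = T.wflat F₂) :
    (∀ i : Fin p, T.fInd (e.symm (Sum.inl i)) = -(q : ℤ)) ∧
    (∀ j : Fin q, T.fInd (e.symm (Sum.inr j)) = (p : ℤ)) ∧
    T.wflat F = (q : ℤ) - (p : ℤ) ∧
    (p ≠ q → ∀ U : T.FDiagram, IsEmpty (T.fCrossing U) → ¬ T.fEquiv F U) := by
  have hH (i : Fin p) : T.fInd (e.symm (Sum.inl i)) = -(q : ℤ) := by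
    simp [hdef, sum_apply_inl_of_bipartite e ε (-1) hHV hHH]
  have hV (j : Fin q) : T.fInd (e.symm (Sum.inr j)) = (p : ℤ) := by
    simp [hdef, sum_apply_inr_of_bipartite e ε 1 hVH hVV]
  have hw : T.wflat F = (q : ℤ) - (p : ℤ) := by
    simpa using T.wflat_eq_card_sub_card e (fun i => by simpa [hH i] using hq)
      (fun j => by simpa [hV j] using hp)
  refine ⟨hH, hV, hw, fun hpq U hU hFU => ?_⟩
  have hwU := hwinv F U hFU
  rw [hw, T.wflat_eq_zero_of_isEmpty U] at hwU
  omega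
end
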